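/- Let (D, ∂) be a cochain complex of finite-dimensional vector spaces over a field with integers s ≤ t such that t - s is odd. Then χ_{s,t}(H(D,∂)) - min(dim D^t, dim D^{t+1}) ≤ χ_{s,t}(D) ≤ χ_{s,t}(H(D,∂)) + min(dim D^{s-1}, dim D^s). -/
import Mathlib


open Module

/-- Dimension of the cohomology of the complex `(D, d)` at degree `i`:
`H^i = (D^i ∩ ker d) / d(D^{i-1})`. -/
noncomputable def cohomDim {K M : Type*} [Field K] [AddCommGroup M] [Module K M]
    (D : ℤ → Submodule K M) (d : M →ₗ[K] M) (i : ℤ) : ℕ :=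
  Module.finrank K
    ((↥(D i ⊓ LinearMap.ker d)) ⧸
      (((D (i - 1)).map d).comap (D i ⊓ LinearMap.ker d).subtype))

private lemma telescope_aux (r : ℤ → ℤ) (s : ℤ) :
    ∀ t, s ≤ t →
      ∑ i ∈ Finset.Icc s t, (-1 : ℤ) ^ (i - s).toNat * (r i + r (i - 1))
        = r (s - 1) - (-1 : ℤ) ^ (t + 1 - s).toNat * r t := by
  refine Int.le_induction ?_ ?_
  · rw [Finset.Icc_self, Finset.sum_singleton]
    have h1 : (s - s).toNat = 0 := by omega
    have h2 : (s + 1 - s).toNat = 1 := by omega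
    rw [h1, h2]; ring_nf
  · intro t hst ih
    have hins : Finset.Icc s (t + 1) = insert (t + 1) (Finset.Icc s t) := by
      ext x; simp [Finset.mem_Icc]; omega
    have hnm : (t + 1) ∉ Finset.Icc s t := by simp [Finset.mem_Icc]
    rw [hins, Finset.sum_insert hnm, ih]
    have h1 : (t + 1 - s).toNat = (t - s).toNat + 1 := by omega
    have h2 : (t + 1 + 1 - s).toNat = (t - s).toNat + 2 := by omega
    rw [h1, h2]
    ring_nf

/-- For `t - s` odd:
χ_{s,t}(H) - min(dim D^t, dim D^{t+1}) ≤ χ_{s,t}(D) ≤ χ_{s,t}(H) + min(dim D^{s-1}, dim D^s). -/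
theorem stmt2 {K M : Type*} [Field K] [AddCommGroup M] [Module K M]
    (D : ℤ → Submodule K M) (d : M →ₗ[K] M)
    (hdeg : ∀ i : ℤ, (D i).map d ≤ D (i + 1))
    (hsq : ∀ i : ℤ, ∀ x ∈ D i, d (d x) = 0)
    (hfd : ∀ i : ℤ, FiniteDimensional K (D i))
    (s t : ℤ) (hst : s ≤ t) (hodd : Odd (t - s)) :
    (∑ i ∈ Finset.Icc s t, (-1 : ℤ) ^ (i - s).toNat * (cohomDim D d i : ℤ))
        - (min (Module.finrank K (D t)) (Module.finrank K (D (t + 1))) : ℤ)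
        ≤ (∑ i ∈ Finset.Icc s t, (-1 : ℤ) ^ (i - s).toNat * (Module.finrank K (D i) : ℤ))
      ∧ (∑ i ∈ Finset.Icc s t, (-1 : ℤ) ^ (i - s).toNat * (Module.finrank K (D i) : ℤ))
        ≤ (∑ i ∈ Finset.Icc s t, (-1 : ℤ) ^ (i - s).toNat * (cohomDim D d i : ℤ))
          + (min (Module.finrank K (D (s - 1))) (Module.finrank K (D s)) : ℤ) := by
  classical
  haveI : ∀ i : ℤ, FiniteDimensional K (D i) := hfd
  haveI hfdz : ∀ i : ℤ, FiniteDimensional K (D i ⊓ LinearMap.ker d : Submodule K M) :=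
    fun i => Submodule.finiteDimensional_of_le inf_le_left
  haveI hfdr : ∀ i : ℤ, FiniteDimensional K ((D i).map d : Submodule K M) :=
    fun i => Submodule.finiteDimensional_of_le (hdeg i)
  -- image of previous degree lies in the cocycles
  have hmap_le : ∀ i : ℤ, (D (i - 1)).map d ≤ D i ⊓ LinearMap.ker d := by
    intro i
    refine le_inf ?_ ?_
    · have := hdeg (i - 1); simpa using this
    · rintro x ⟨y, hy, rfl⟩
      exact hsq (i - 1) y hy
  -- rank-nullity at each degree
  have hrn : ∀ i : ℤ, Module.finrank K (D i)
      = Module.finrank K (D i ⊓ LinearMap.ker d : Submodule K M)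
        + Module.finrank K ((D i).map d : Submodule K M) := by
    intro i
    have h1 := LinearMap.finrank_range_add_finrank_ker (d.domRestrict (D i))
    rw [LinearMap.range_domRestrict, LinearMap.ker_domRestrict] at h1
    have h2 : Module.finrank K (Submodule.comap (D i).subtype (LinearMap.ker d))
        = Module.finrank K (D i ⊓ LinearMap.ker d : Submodule K M) := by
      have he : Submodule.comap (D i).subtype (LinearMap.ker d)
          = Submodule.comap (D i).subtype (D i ⊓ LinearMap.ker d) := by
        rw [Submodule.comap_inf, Submodule.comap_subtype_self]
        simp
      rw [he]
      exact ((D i ⊓ LinearMap.ker d).comapSubtypeEquivOfLe inf_le_left).finrank_eq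
    omega
  -- cohomology dimension
  have hcoh : ∀ i : ℤ, (cohomDim D d i : ℤ)
      = (Module.finrank K (D i ⊓ LinearMap.ker d : Submodule K M) : ℤ)
        - (Module.finrank K ((D (i - 1)).map d : Submodule K M) : ℤ) := by
    intro i
    have hq := Submodule.finrank_quotient_add_finrank
      (R := K) (((D (i - 1)).map d).comap (D i ⊓ LinearMap.ker d).subtype)
    have h2 : Module.finrank K
        ((((D (i - 1)).map d).comap (D i ⊓ LinearMap.ker d).subtype) :
          Submodule K ↥(D i ⊓ LinearMap.ker d))
        = Module.finrank K ((D (i - 1)).map d : Submodule K M) :=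
      (Submodule.comapSubtypeEquivOfLe (hmap_le i)).finrank_eq
    unfold cohomDim
    omega
  -- difference of the two sums telescopes
  have hsum : (∑ i ∈ Finset.Icc s t, (-1 : ℤ) ^ (i - s).toNat * (Module.finrank K (D i) : ℤ))
      - (∑ i ∈ Finset.Icc s t, (-1 : ℤ) ^ (i - s).toNat * (cohomDim D d i : ℤ))
      = (Module.finrank K ((D (s - 1)).map d : Submodule K M) : ℤ)
        - (Module.finrank K ((D t).map d : Submodule K M) : ℤ) := by
    rw [← Finset.sum_sub_distrib]
    have hst2 : ∀ i ∈ Finset.Icc s t,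
        (-1 : ℤ) ^ (i - s).toNat * (Module.finrank K (D i) : ℤ)
          - (-1 : ℤ) ^ (i - s).toNat * (cohomDim D d i : ℤ)
        = (-1 : ℤ) ^ (i - s).toNat *
            ((Module.finrank K ((D i).map d : Submodule K M) : ℤ)
              + (Module.finrank K ((D (i - 1)).map d : Submodule K M) : ℤ)) := by
      intro i _
      rw [hcoh i, hrn i]
      push_cast
      ring_nf
    rw [Finset.sum_congr rfl hst2,
      telescope_aux (fun i => (Module.finrank K ((D i).map d : Submodule K M) : ℤ)) s t hst]
    have heven : (t + 1 - s).toNat = (t - s).toNat + 1 := by omega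
    have hoddn : Odd (t - s).toNat := by
      obtain ⟨k, hk⟩ := hodd
      exact ⟨k.toNat, by omega⟩
    rw [heven, pow_succ, Odd.neg_one_pow hoddn]
    ring_nf
  -- bounds on the two ranks
  have hrt1 : (Module.finrank K ((D t).map d : Submodule K M) : ℤ)
      ≤ (Module.finrank K (D t) : ℤ) := by
    have := hrn t; omega
  have hrt2 : (Module.finrank K ((D t).map d : Submodule K M) : ℤ)
      ≤ (Module.finrank K (D (t + 1)) : ℤ) := by
    exact_mod_cast Submodule.finrank_mono (hdeg t)
  have hrs1 : (Module.finrank K ((D (s - 1)).map d : Submodule K M) : ℤ)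
      ≤ (Module.finrank K (D (s - 1)) : ℤ) := by
    have := hrn (s - 1); omega
  have hrs2 : (Module.finrank K ((D (s - 1)).map d : Submodule K M) : ℤ)
      ≤ (Module.finrank K (D s) : ℤ) := by
    have h := Submodule.finrank_mono (hmap_le s)
    have h2 : Module.finrank K (D s ⊓ LinearMap.ker d : Submodule K M)
        ≤ Module.finrank K (D s) := Submodule.finrank_mono inf_le_left
    exact_mod_cast le_trans h h2
  have hmin1 : (Module.finrank K ((D t).map d : Submodule K M) : ℤ)
      ≤ (min (Module.finrank K (D t)) (Module.finrank K (D (t + 1))) : ℤ) := by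
    push_cast; exact le_min hrt1 hrt2
  have hmin2 : (Module.finrank K ((D (s - 1)).map d : Submodule K M) : ℤ)
      ≤ (min (Module.finrank K (D (s - 1))) (Module.finrank K (D s)) : ℤ) := by
    push_cast; exact le_min hrs1 hrs2
  have h0 : (0 : ℤ) ≤ (Module.finrank K ((D t).map d : Submodule K M) : ℤ) :=
    Int.ofNat_nonneg _
  have h0' : (0 : ℤ) ≤ (Module.finrank K ((D (s - 1)).map d : Submodule K M) : ℤ) :=
    Int.ofNat_nonneg _
  constructor <;> linarith
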